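/- arXiv:1801.00925 — 3 statements merged into one kernel-verified Lean document; each statement's English description precedes it below -/
import Mathlib

section
/- Let Ω ⊆ ℂ be a simply connected domain, A holomorphic on Ω, γ : [0, ∞) → Ω a path tending to infinity with starting point y₀, satisfying ∫_γ (1 + |t|) |t A(t)| |dt| ≤ 1/2. If v solves v'' + A v = 0 on Ω, then v(z) = O(|z|) as z → ∞ along γ. More precisely, if v(z) = a₁ z + b₁ − ∫_{y₀}^z (z − t) A(t) v(t) dt along γ and |z| ≥ 1 on γ, then sup_{z ∈ γ} |v(z)/z| ≤ 2(|a₁| + |b₁|). -/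
/-!
Let `S` be the maximum of `|v(γ s) / γ s|` over `s ∈ [0, t]`, attained at `t₀`. In the integral
representation at `z = γ t₀`, the kernel satisfies `|z - ζ| ≤ |z| (1 + |ζ|)` because `|z| ≥ 1`, and
`|v(ζ)| ≤ S |ζ|`, so the integral is at most `|z| · S · ∫_γ (1 + |ζ|) |ζ A(ζ)| |dζ| ≤ |z| S / 2`.
Dividing the representation by `z` gives `S ≤ |a₁| + |b₁| + S / 2`.
-/

open Set Filter MeasureTheory

namespace Complex

theorem norm_sub_le_norm_mul_one_add_norm {z ζ : ℂ} (hz : 1 ≤ ‖z‖) :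
    ‖z - ζ‖ ≤ ‖z‖ * (1 + ‖ζ‖) :=
  calc ‖z - ζ‖ ≤ ‖z‖ + ‖ζ‖ := norm_sub_le z ζ
    _ ≤ ‖z‖ * (1 + ‖ζ‖) := by nlinarith [norm_nonneg ζ]

theorem norm_sub_mul_mul_mul_le {z ζ a u d : ℂ} {M : ℝ} (hz : 1 ≤ ‖z‖) (hu : ‖u‖ ≤ M * ‖ζ‖) :
    ‖(z - ζ) * a * u * d‖ ≤ ‖z‖ * M * ((1 + ‖ζ‖) * ‖ζ * a‖ * ‖d‖) :=
  calc ‖(z - ζ) * a * u * d‖ = ‖z - ζ‖ * ‖a‖ * ‖u‖ * ‖d‖ := by simp only [norm_mul]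
    _ ≤ ‖z‖ * (1 + ‖ζ‖) * ‖a‖ * (M * ‖ζ‖) * ‖d‖ := by
      gcongr
      exact norm_sub_le_norm_mul_one_add_norm hz
    _ = ‖z‖ * M * ((1 + ‖ζ‖) * ‖ζ * a‖ * ‖d‖) := by rw [norm_mul]; ring

theorem norm_div_le_of_eq_mul_add_sub {u z a b I : ℂ} {K : ℝ} (hz : 1 ≤ ‖z‖)
    (hu : u = a * z + b - I) (hI : ‖I‖ ≤ ‖z‖ * K) : ‖u / z‖ ≤ ‖a‖ + ‖b‖ + K := by
  have hz₀ : 0 < ‖z‖ := one_pos.trans_le hz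
  have hdiv : u / z = a + b / z - I / z := by
    field_simp [norm_pos_iff.1 hz₀]
    rw [hu, mul_comm]
  have hb : ‖b / z‖ ≤ ‖b‖ := by
    rw [norm_div]
    exact div_le_self (norm_nonneg b) hz
  have hI' : ‖I / z‖ ≤ K := by
    rw [norm_div, div_le_iff₀ hz₀, mul_comm]
    exact hI
  rw [hdiv]
  calc ‖a + b / z - I / z‖ ≤ ‖a‖ + ‖b / z‖ + ‖I / z‖ :=
        (norm_sub_le _ _).trans (by gcongr; exact norm_add_le _ _)
    _ ≤ ‖a‖ + ‖b‖ + K := by gcongr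

end Complex

section PathIntegral

variable {A v : ℂ → ℂ} {γ : ℝ → ℂ} {s M ε : ℝ}

theorem norm_setIntegral_kernel_le (hγs : 1 ≤ ‖γ s‖) (hM₀ : 0 ≤ M)
    (hM : ∀ τ ∈ Ioc 0 s, ‖v (γ τ)‖ ≤ M * ‖γ τ‖)
    (hintble : IntegrableOn
      (fun τ => (1 + ‖γ τ‖) * ‖γ τ * A (γ τ)‖ * ‖deriv γ τ‖) (Ioi 0))
    (hint : ∫ τ in Ioi (0:ℝ), (1 + ‖γ τ‖) * ‖γ τ * A (γ τ)‖ * ‖deriv γ τ‖ ≤ ε) :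
    ‖∫ τ in Ioc (0:ℝ) s, (γ s - γ τ) * A (γ τ) * v (γ τ) * deriv γ τ‖ ≤ ‖γ s‖ * (ε * M) := by
  set w : ℝ → ℝ := fun τ => (1 + ‖γ τ‖) * ‖γ τ * A (γ τ)‖ * ‖deriv γ τ‖
  have hw₀ : ∀ τ, 0 ≤ w τ := fun τ => by positivity
  have hw : ∫ τ in Ioc (0:ℝ) s, w τ ≤ ε :=
    (setIntegral_mono_set hintble (.of_forall hw₀) Ioc_subset_Ioi_self.eventuallyLE).trans hint
  have hpoint : ∀ᵐ τ ∂volume.restrict (Ioc 0 s),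
      ‖(γ s - γ τ) * A (γ τ) * v (γ τ) * deriv γ τ‖ ≤ ‖γ s‖ * M * w τ := by
    filter_upwards [ae_restrict_mem measurableSet_Ioc] with τ hτ
    exact Complex.norm_sub_mul_mul_mul_le hγs (hM τ hτ)
  calc _ ≤ ∫ τ in Ioc (0:ℝ) s, ‖γ s‖ * M * w τ :=
        norm_integral_le_of_norm_le ((hintble.mono_set Ioc_subset_Ioi_self).const_mul _) hpoint
    _ = ‖γ s‖ * M * ∫ τ in Ioc (0:ℝ) s, w τ := integral_const_mul _ _
    _ ≤ ‖γ s‖ * M * ε := by gcongr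
    _ = ‖γ s‖ * (ε * M) := by ring

end PathIntegral

theorem stmt_11_general (Ω : Set ℂ) (A v : ℂ → ℂ)
    (hv : AnalyticOnNhd ℂ v Ω)
    (γ : ℝ → ℂ) (hγd : Differentiable ℝ γ)
    (hγΩ : ∀ t, 0 ≤ t → γ t ∈ Ω)
    (hγ1 : ∀ t, 0 ≤ t → 1 ≤ ‖γ t‖)
    (hintble : IntegrableOn
      (fun τ => (1 + ‖γ τ‖) * ‖γ τ * A (γ τ)‖ * ‖deriv γ τ‖) (Set.Ioi 0))
    (hint : (∫ τ in Set.Ioi (0:ℝ),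
      (1 + ‖γ τ‖) * ‖γ τ * A (γ τ)‖ * ‖deriv γ τ‖) ≤ 1 / 2)
    (a₁ b₁ : ℂ)
    (hrep : ∀ t, 0 ≤ t → v (γ t) = a₁ * γ t + b₁ -
      ∫ τ in Set.Ioc (0:ℝ) t, (γ t - γ τ) * A (γ τ) * v (γ τ) * deriv γ τ) :
    ∀ t, 0 ≤ t → ‖v (γ t) / γ t‖ ≤ 2 * (‖a₁‖ + ‖b₁‖) := by
  intro t ht
  have hγ₀ : ∀ s, 0 ≤ s → 0 < ‖γ s‖ := fun s hs => one_pos.trans_le (hγ1 s hs)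
  have hcont : ContinuousOn (fun s => ‖v (γ s) / γ s‖) (Icc 0 t) :=
    ((hv.continuousOn.comp hγd.continuous.continuousOn fun s hs => hγΩ s hs.1).div
      hγd.continuous.continuousOn fun s hs => norm_pos_iff.1 (hγ₀ s hs.1)).norm
  obtain ⟨t₀, ⟨ht₀, ht₀t⟩, hmax⟩ := isCompact_Icc.exists_isMaxOn ⟨0, le_rfl, ht⟩ hcont
  set S := ‖v (γ t₀) / γ t₀‖
  have hbound : ∀ τ ∈ Ioc 0 t₀, ‖v (γ τ)‖ ≤ S * ‖γ τ‖ := fun τ hτ => by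
    have hτS : ‖v (γ τ) / γ τ‖ ≤ S := hmax ⟨hτ.1.le, hτ.2.trans ht₀t⟩
    rwa [norm_div, div_le_iff₀ (hγ₀ τ hτ.1.le)] at hτS
  have hS : S ≤ ‖a₁‖ + ‖b₁‖ + 1 / 2 * S :=
    Complex.norm_div_le_of_eq_mul_add_sub (hγ1 t₀ ht₀) (hrep t₀ ht₀)
      (norm_setIntegral_kernel_le (hγ1 t₀ ht₀) (norm_nonneg _) hbound hintble hint)
  calc ‖v (γ t) / γ t‖ ≤ S := hmax ⟨ht, le_rfl⟩
    _ ≤ 2 * (‖a₁‖ + ‖b₁‖) := by linarith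

/-- Gronwall-type bound: a solution of `v'' + A v = 0` satisfying the stated
integral representation along a path `γ` tending to infinity, with small
weighted arc-length integral, satisfies `|v(z)/z| ≤ 2(|a₁|+|b₁|)` on `γ`. -/
theorem stmt_11 (Ω : Set ℂ) (hΩ : IsOpen Ω) (A v : ℂ → ℂ)
    (hA : AnalyticOnNhd ℂ A Ω) (hv : AnalyticOnNhd ℂ v Ω)
    (hode : ∀ z ∈ Ω, iteratedDeriv 2 v z + A z * v z = 0)
    (γ : ℝ → ℂ) (hγd : Differentiable ℝ γ)
    (hγΩ : ∀ t, 0 ≤ t → γ t ∈ Ω)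
    (hγinf : Tendsto (fun t => ‖γ t‖) atTop atTop)
    (hγ1 : ∀ t, 0 ≤ t → 1 ≤ ‖γ t‖)
    (hintble : IntegrableOn
      (fun τ => (1 + ‖γ τ‖) * ‖γ τ * A (γ τ)‖ * ‖deriv γ τ‖) (Set.Ioi 0))
    (hint : (∫ τ in Set.Ioi (0:ℝ),
      (1 + ‖γ τ‖) * ‖γ τ * A (γ τ)‖ * ‖deriv γ τ‖) ≤ 1 / 2)
    (a₁ b₁ : ℂ)
    (hrep : ∀ t, 0 ≤ t → v (γ t) = a₁ * γ t + b₁ -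
      ∫ τ in Set.Ioc (0:ℝ) t, (γ t - γ τ) * A (γ τ) * v (γ τ) * deriv γ τ) :
    ∀ t, 0 ≤ t → ‖v (γ t) / γ t‖ ≤ 2 * (‖a₁‖ + ‖b₁‖) :=
  stmt_11_general Ω A v hv γ hγd hγΩ hγ1 hintble hint a₁ b₁ hrep
end

section
/- Let A be holomorphic on a simply connected domain Ω ⊆ ℂ containing a path γ tending to ∞, with |A(t)|^{-1/4} ≥ |t|² ≥ 4 on γ and ∫_γ |A(t)|^{1/4} |dt| < 1/4, and suppose |A(γ(s))| ≤ C |A(γ(t))|^{δ₀} for all s ≥ t (some C > 0, δ₀ ∈ (0,1)). If v is a solution of v'' + A v = 0 on Ω with v(z) = O(|z|) on γ and v(z) = α z + β + ∫_z^∞ (z − t) A(t) v(t) dt along γ, then for every N ∈ ℕ: v(z) − α z − β = O(|z|^{-N}) and v'(z) − α = O(|z|^{-N}) as z → ∞ along γ. -/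
/-!
Write `J t = ∫_t^∞ A v dτ` and `L t = ∫_t^∞ τ A v dτ` along `γ`, so that the representation reads
`v - α z - β = z J - L`. Along `γ`, `v'` and `v - z v'` have derivatives `-A v` and `z A v`
respectively, so `v' - J` and `v - z v' + L` are constant; substituting the representation,
`(α - (v' - J)) z` is constant on the unbounded path, whence `v' = α + J`.
For the decay, `|A| |z|² ≤ |A|^{3/4}` on `γ`, and for `τ ≥ t` the tail hypothesis bounds the surplus
factor `|A(τ)|^{1/2}` by `C^{1/2} |A(γ t)|^{δ₀/2}`. Thus `J` and `L` are `O(|A(γ t)|^{δ₀/2})`,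
which by the logarithmic hypothesis beats every power of `|γ t|`.
-/

open Set Filter MeasureTheory

theorem pos_and_le_one_of_one_le_rpow_neg {a r : ℝ} (ha : 0 ≤ a) (hr : 0 < r)
    (h : 1 ≤ a ^ (-r)) : 0 < a ∧ a ≤ 1 := by
  have ha0 : 0 < a := by
    refine ha.lt_of_ne fun h0 => ?_
    rw [← h0, Real.zero_rpow (neg_ne_zero.2 hr.ne')] at h
    norm_num at h
  refine ⟨ha0, ?_⟩
  by_contra! h1
  linarith [Real.rpow_lt_one_of_one_lt_of_neg h1 (neg_neg_of_pos hr)]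

theorem norm_mul_mul_mul_le {𝕜 : Type*} [NormedField 𝕜] {z a k d : 𝕜} {b K₀ C δ : ℝ}
    (hz : 1 ≤ ‖z‖) (ha : 0 < ‖a‖) (hza : ‖z‖ ^ 2 ≤ ‖a‖ ^ (-(1 / 4) : ℝ))
    (hk : ‖k‖ ≤ K₀ * ‖z‖) (hb : 0 ≤ b) (hC : 0 < C) (hab : ‖a‖ ≤ C * b ^ δ) :
    ‖z * (a * k * d)‖ ≤ K₀ * C ^ (1 / 2 : ℝ) * b ^ (δ / 2) * (‖a‖ ^ (1 / 4 : ℝ) * ‖d‖) ∧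
      ‖a * k * d‖ ≤ K₀ * C ^ (1 / 2 : ℝ) * b ^ (δ / 2) * (‖a‖ ^ (1 / 4 : ℝ) * ‖d‖) := by
  have hK₀ : 0 ≤ K₀ := by nlinarith [norm_nonneg k]
  have h34 : ‖a‖ * ‖z‖ ^ 2 ≤ ‖a‖ ^ (1 / 4 : ℝ) * ‖a‖ ^ (1 / 2 : ℝ) := by
    calc ‖a‖ * ‖z‖ ^ 2 ≤ ‖a‖ ^ (1 : ℝ) * ‖a‖ ^ (-(1 / 4) : ℝ) := by
          rw [Real.rpow_one]; gcongr
      _ = ‖a‖ ^ (1 / 4 : ℝ) * ‖a‖ ^ (1 / 2 : ℝ) := by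
          rw [← Real.rpow_add ha, ← Real.rpow_add ha]; norm_num
  have hhalf : ‖a‖ ^ (1 / 2 : ℝ) ≤ C ^ (1 / 2 : ℝ) * b ^ (δ / 2) := by
    calc ‖a‖ ^ (1 / 2 : ℝ) ≤ (C * b ^ δ) ^ (1 / 2 : ℝ) := by gcongr
      _ = C ^ (1 / 2 : ℝ) * b ^ (δ / 2) := by
          rw [Real.mul_rpow hC.le (by positivity), ← Real.rpow_mul hb, mul_one_div]
  have hzakd : ‖z * (a * k * d)‖ ≤
      K₀ * C ^ (1 / 2 : ℝ) * b ^ (δ / 2) * (‖a‖ ^ (1 / 4 : ℝ) * ‖d‖) := by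
    calc ‖z * (a * k * d)‖ = ‖z‖ * (‖a‖ * ‖k‖ * ‖d‖) := by simp only [norm_mul]
      _ ≤ ‖z‖ * (‖a‖ * (K₀ * ‖z‖) * ‖d‖) := by gcongr
      _ = K₀ * (‖a‖ * ‖z‖ ^ 2) * ‖d‖ := by ring
      _ ≤ K₀ * (‖a‖ ^ (1 / 4 : ℝ) * (C ^ (1 / 2 : ℝ) * b ^ (δ / 2))) * ‖d‖ := by
          gcongr K₀ * ?_ * _
          exact h34.trans (by gcongr)
      _ = K₀ * C ^ (1 / 2 : ℝ) * b ^ (δ / 2) * (‖a‖ ^ (1 / 4 : ℝ) * ‖d‖) := by ring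
  refine ⟨hzakd, le_trans ?_ hzakd⟩
  rw [norm_mul z]
  exact le_mul_of_one_le_left (norm_nonneg _) hz

theorem pow_mul_rpow_le_one_of_le_log_div_log {a n ε : ℝ} {M : ℕ} (ha : 0 < a) (hn : 1 < n)
    (hε : 0 < ε) (h : M / ε ≤ Real.log (1 / a) / Real.log n) : n ^ M * a ^ ε ≤ 1 := by
  rw [div_le_div_iff₀ hε (Real.log_pos hn), one_div, Real.log_inv] at h
  rw [← Real.log_nonpos_iff (by positivity), Real.log_mul (by positivity) (by positivity),
    Real.log_pow, Real.log_rpow ha]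
  linarith

theorem exists_pow_mul_rpow_le_of_tendsto_log_div_log {n a : ℝ → ℝ} (hn : Continuous n)
    (hn1 : ∀ t, 0 ≤ t → 1 < n t) (ha : ∀ t, 0 ≤ t → 0 < a t ∧ a t ≤ 1)
    (hlog : Tendsto (fun t => Real.log (1 / a t) / Real.log (n t)) atTop atTop)
    {ε : ℝ} (hε : 0 < ε) (M : ℕ) : ∃ K, ∀ t, 0 ≤ t → n t ^ M * a t ^ ε ≤ K := by
  obtain ⟨T, hT⟩ := eventually_atTop.1 (hlog.eventually_ge_atTop (M / ε))
  obtain ⟨B, hB⟩ := isCompact_Icc.exists_bound_of_continuousOn (hn.continuousOn (s := Icc 0 T))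
  refine ⟨max 1 (B ^ M), fun t ht => ?_⟩
  obtain ⟨ha0, ha1⟩ := ha t ht
  rcases le_total T t with hTt | htT
  · exact (pow_mul_rpow_le_one_of_le_log_div_log ha0 (hn1 t ht) hε (hT t hTt)).trans
      (le_max_left _ _)
  · have hn0 : 0 ≤ n t := by linarith [hn1 t ht]
    have hnB : n t ≤ B := (le_abs_self _).trans (hB t ⟨ht, htT⟩)
    calc n t ^ M * a t ^ ε ≤ B ^ M * 1 :=
          mul_le_mul (pow_le_pow_left₀ hn0 hnB M) (Real.rpow_le_one ha0.le ha1 hε.le)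
            (by positivity) (pow_nonneg (hn0.trans hnB) M)
      _ ≤ max 1 (B ^ M) := by rw [mul_one]; exact le_max_right _ _

theorem norm_mul_sub_le_div_pow {𝕜 : Type*} [NormedRing 𝕜] {z J L : 𝕜} {B b K : ℝ} {N : ℕ}
    (hz : 1 ≤ ‖z‖) (hB : 0 ≤ B) (hb : 0 ≤ b) (hJ : ‖J‖ ≤ B * b) (hL : ‖L‖ ≤ B * b)
    (hK : ‖z‖ ^ (N + 1) * b ≤ K) :
    ‖z * J - L‖ ≤ 2 * B * K / ‖z‖ ^ N ∧ ‖J‖ ≤ 2 * B * K / ‖z‖ ^ N := by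
  have hzb : 2 * B * (‖z‖ * b) ≤ 2 * B * K / ‖z‖ ^ N := by
    rw [le_div_iff₀ (by positivity)]
    calc 2 * B * (‖z‖ * b) * ‖z‖ ^ N = 2 * B * (‖z‖ ^ (N + 1) * b) := by ring
      _ ≤ 2 * B * K := by gcongr
  have hbz : B * b ≤ B * (‖z‖ * b) := by gcongr; exact le_mul_of_one_le_left hb hz
  refine ⟨?_, by linarith [mul_nonneg hB hb]⟩
  calc ‖z * J - L‖ ≤ ‖z‖ * ‖J‖ + ‖L‖ := (norm_sub_le _ _).trans (by gcongr; exact norm_mul_le _ _)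
    _ ≤ ‖z‖ * (B * b) + B * b := by gcongr
    _ ≤ 2 * B * (‖z‖ * b) := by linarith
    _ ≤ 2 * B * K / ‖z‖ ^ N := hzb

theorem integrableOn_Ioi_and_norm_integral_le {E : Type*} [NormedAddCommGroup E]
    [NormedSpace ℝ E] {f : ℝ → E} {w b : ℝ → ℝ} {a : ℝ}
    (hf : AEStronglyMeasurable f (volume.restrict (Ioi a))) (hw : IntegrableOn w (Ioi a))
    (hw0 : ∀ τ, 0 ≤ w τ) (hb : ∀ t, a ≤ t → 0 ≤ b t)
    (hfw : ∀ t τ, a ≤ t → t < τ → ‖f τ‖ ≤ b t * w τ) :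
    IntegrableOn f (Ioi a) ∧ ∀ t, a ≤ t → ‖∫ τ in Ioi t, f τ‖ ≤ b t * ∫ τ in Ioi a, w τ := by
  refine ⟨(hw.const_mul (b a)).mono' hf
    ((ae_restrict_iff' measurableSet_Ioi).2 (ae_of_all _ (hfw a · le_rfl))), fun t ht => ?_⟩
  calc ‖∫ τ in Ioi t, f τ‖ ≤ ∫ τ in Ioi t, b t * w τ :=
        norm_integral_le_of_norm_le ((hw.mono_set (Ioi_subset_Ioi ht)).const_mul _)
          ((ae_restrict_iff' measurableSet_Ioi).2 (ae_of_all _ (hfw t · ht)))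
    _ = b t * ∫ τ in Ioi t, w τ := integral_const_mul _ _
    _ ≤ b t * ∫ τ in Ioi a, w τ := mul_le_mul_of_nonneg_left
        (setIntegral_mono_set hw (ae_of_all _ hw0) (Ioi_subset_Ioi ht).eventuallyLE) (hb t ht)

theorem aestronglyMeasurable_comp_mul_deriv {f : ℂ → ℂ} {Ω : Set ℂ} {γ : ℝ → ℂ} {s : Set ℝ}
    (hf : ContinuousOn f Ω) (hγ : Continuous γ) (hs : MeasurableSet s) (hγs : MapsTo γ s Ω) :
    AEStronglyMeasurable (fun τ => f (γ τ) * deriv γ τ) (volume.restrict s) :=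
  ((hf.comp hγ.continuousOn hγs).aestronglyMeasurable hs).mul
    (measurable_deriv γ).aestronglyMeasurable

theorem add_integral_Ioi_eq_of_hasDerivAt {E : Type*} [NormedAddCommGroup E] [NormedSpace ℝ E]
    [CompleteSpace E] {f f' : ℝ → E} {a t : ℝ}
    (hderiv : ∀ x ∈ Ici a, HasDerivAt f (f' x) x) (hint : IntegrableOn f' (Ioi a))
    (ht : a ≤ t) :
    f t + ∫ x in Ioi t, f' x = f a + ∫ x in Ioi a, f' x := by
  have hftc : ∫ x in a..t, f' x = f t - f a :=
    intervalIntegral.integral_eq_sub_of_hasDerivAt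
      (fun x hx => hderiv x (by rw [uIcc_of_le ht] at hx; exact hx.1))
      ((intervalIntegrable_iff_integrableOn_Ioc_of_le ht).2
        (hint.mono_set Ioc_subset_Ioi_self))
  rw [← Ioc_union_Ioi_eq_Ioi ht, setIntegral_union Ioc_disjoint_Ioi_same measurableSet_Ioi
    (hint.mono_set Ioc_subset_Ioi_self) (hint.mono_set (Ioi_subset_Ioi ht)),
    ← intervalIntegral.integral_of_le ht, hftc]
  abel

theorem integral_sub_mul_eq {𝕜 : Type*} [RCLike 𝕜] {f g : ℝ → 𝕜} {s : Set ℝ} (z : 𝕜)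
    (hg : IntegrableOn g s) (hfg : IntegrableOn (fun τ => f τ * g τ) s) :
    ∫ τ in s, (z - f τ) * g τ = z * (∫ τ in s, g τ) - ∫ τ in s, f τ * g τ := by
  simp only [sub_mul]
  rw [integral_sub (hg.const_mul z) hfg, integral_const_mul]

theorem sub_eq_integral_Ioi_of_hasDerivAt {𝕜 : Type*} [RCLike 𝕜] {p q g γ : ℝ → 𝕜} {α β : 𝕜}
    {a s t : ℝ}
    (hq : ∀ x ∈ Ici a, HasDerivAt q (-g x) x)
    (hpq : ∀ x ∈ Ici a, HasDerivAt (fun σ => p σ - γ σ * q σ) (γ x * g x) x)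
    (hg : IntegrableOn g (Ioi a)) (hγg : IntegrableOn (fun τ => γ τ * g τ) (Ioi a))
    (hrep : ∀ t, a ≤ t →
      p t - α * γ t - β = γ t * (∫ τ in Ioi t, g τ) - ∫ τ in Ioi t, γ τ * g τ)
    (hs : a ≤ s) (hγs : γ s ≠ γ a) (ht : a ≤ t) :
    q t - α = ∫ τ in Ioi t, g τ := by
  have hq_const : ∀ t, a ≤ t → q t - ∫ τ in Ioi t, g τ = q a - ∫ τ in Ioi a, g τ := by
    intro t ht
    simpa only [integral_neg, ← sub_eq_add_neg] using
      add_integral_Ioi_eq_of_hasDerivAt hq hg.neg ht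
  have hG : α = q a - ∫ τ in Ioi a, g τ := by
    have hW := add_integral_Ioi_eq_of_hasDerivAt hpq hγg hs
    have h : (α - (q a - ∫ τ in Ioi a, g τ)) * (γ s - γ a) = 0 := by
      linear_combination hW - hrep s hs + hrep a le_rfl + γ s * hq_const s hs
    simpa [sub_eq_zero, hγs] using h
  linear_combination hq_const t ht - hG

theorem hasDerivAt_deriv_comp_of_ode {v : ℂ → ℂ} {γ : ℝ → ℂ} {a : ℂ} {x : ℝ}
    (hv : AnalyticAt ℂ v (γ x)) (hode : iteratedDeriv 2 v (γ x) + a * v (γ x) = 0)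
    (hγ : DifferentiableAt ℝ γ x) :
    HasDerivAt (fun σ => deriv v (γ σ)) (-(a * v (γ x) * deriv γ x)) x := by
  rw [iteratedDeriv_succ, iteratedDeriv_one] at hode
  refine (hv.deriv.differentiableAt.hasDerivAt.scomp x hγ.hasDerivAt).congr_deriv ?_
  rw [smul_eq_mul]
  linear_combination deriv γ x * hode

theorem hasDerivAt_sub_mul_deriv_comp_of_ode {v : ℂ → ℂ} {γ : ℝ → ℂ} {a : ℂ} {x : ℝ}
    (hv : AnalyticAt ℂ v (γ x)) (hode : iteratedDeriv 2 v (γ x) + a * v (γ x) = 0)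
    (hγ : DifferentiableAt ℝ γ x) :
    HasDerivAt (fun σ => v (γ σ) - γ σ * deriv v (γ σ)) (γ x * (a * v (γ x) * deriv γ x)) x := by
  refine ((hv.differentiableAt.hasDerivAt.scomp x hγ.hasDerivAt).sub
    (hγ.hasDerivAt.fun_mul (hasDerivAt_deriv_comp_of_ode hv hode hγ))).congr_deriv ?_
  rw [smul_eq_mul]
  ring

theorem stmt_14_general (Ω : Set ℂ) (A v : ℂ → ℂ)
    (hA : AnalyticOnNhd ℂ A Ω) (hv : AnalyticOnNhd ℂ v Ω)
    (hode : ∀ z ∈ Ω, iteratedDeriv 2 v z + A z * v z = 0)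
    (γ : ℝ → ℂ) (hγd : Differentiable ℝ γ)
    (hγΩ : ∀ t, 0 ≤ t → γ t ∈ Ω)
    (hγinf : Tendsto (fun t => ‖γ t‖) atTop atTop)
    (hAsmall : ∀ t, 0 ≤ t →
      4 ≤ ‖γ t‖ ^ 2 ∧ ‖γ t‖ ^ 2 ≤ ‖A (γ t)‖ ^ (-(1 / 4) : ℝ))
    (hintble : IntegrableOn
      (fun τ => ‖A (γ τ)‖ ^ ((1 / 4 : ℝ)) * ‖deriv γ τ‖) (Set.Ioi 0))
    (C δ₀ : ℝ) (hC : 0 < C) (hδ₀ : δ₀ ∈ Set.Ioo (0:ℝ) 1)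
    (htail : ∀ s t : ℝ, 0 ≤ t → t ≤ s → ‖A (γ s)‖ ≤ C * ‖A (γ t)‖ ^ δ₀)
    (hlog : Tendsto (fun t => Real.log (1 / ‖A (γ t)‖) / Real.log ‖γ t‖)
      atTop atTop)
    (K₀ : ℝ) (hK₀ : ∀ t, 0 ≤ t → ‖v (γ t)‖ ≤ K₀ * ‖γ t‖)
    (α β : ℂ)
    (hrep : ∀ t, 0 ≤ t → v (γ t) = α * γ t + β +
      ∫ τ in Set.Ioi t, (γ t - γ τ) * A (γ τ) * v (γ τ) * deriv γ τ) :
    ∀ N : ℕ, ∃ K : ℝ, ∀ t, 0 ≤ t →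
      ‖v (γ t) - α * γ t - β‖ ≤ K / ‖γ t‖ ^ N ∧
      ‖deriv v (γ t) - α‖ ≤ K / ‖γ t‖ ^ N := by
  intro N
  set g : ℝ → ℂ := fun τ => A (γ τ) * v (γ τ) * deriv γ τ
  set w : ℝ → ℝ := fun τ => ‖A (γ τ)‖ ^ (1 / 4 : ℝ) * ‖deriv γ τ‖
  set b : ℝ → ℝ := fun t => K₀ * C ^ (1 / 2 : ℝ) * ‖A (γ t)‖ ^ (δ₀ / 2)
  have hγ1 : ∀ t, 0 ≤ t → 1 < ‖γ t‖ := fun t ht => by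
    nlinarith [(hAsmall t ht).1, norm_nonneg (γ t)]
  have ha : ∀ t, 0 ≤ t → 0 < ‖A (γ t)‖ ∧ ‖A (γ t)‖ ≤ 1 := fun t ht =>
    pos_and_le_one_of_one_le_rpow_neg (r := 1 / 4) (norm_nonneg _) (by norm_num)
      (by linarith [(hAsmall t ht).1, (hAsmall t ht).2])
  have hK₀0 : 0 ≤ K₀ := by nlinarith [(norm_nonneg _).trans (hK₀ 0 le_rfl), hγ1 0 le_rfl]
  have hb : ∀ t, 0 ≤ t → 0 ≤ b t := fun t _ => by positivity
  have hmaj : ∀ t τ, 0 ≤ t → t < τ → ‖γ τ * g τ‖ ≤ b t * w τ ∧ ‖g τ‖ ≤ b t * w τ := by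
    intro t τ ht htτ
    have hτ : 0 ≤ τ := ht.trans htτ.le
    exact norm_mul_mul_mul_le (hγ1 τ hτ).le (ha τ hτ).1 (hAsmall τ hτ).2 (hK₀ τ hτ)
      (norm_nonneg _) hC (htail τ t ht htτ.le)
  have hgm : AEStronglyMeasurable g (volume.restrict (Ioi 0)) :=
    aestronglyMeasurable_comp_mul_deriv (hA.continuousOn.mul hv.continuousOn) hγd.continuous
      measurableSet_Ioi fun t ht => hγΩ t (le_of_lt ht)
  obtain ⟨hg, hJ⟩ := integrableOn_Ioi_and_norm_integral_le hgm hintble (fun τ => by positivity)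
    hb fun t τ ht htτ => (hmaj t τ ht htτ).2
  obtain ⟨hγg, hL⟩ := integrableOn_Ioi_and_norm_integral_le (f := fun τ => γ τ * g τ)
    (hγd.continuous.aestronglyMeasurable.mul hgm) hintble (fun τ => by positivity)
    hb fun t τ ht htτ => (hmaj t τ ht htτ).1
  have hE : ∀ t, 0 ≤ t → v (γ t) - α * γ t - β =
      γ t * (∫ τ in Ioi t, g τ) - ∫ τ in Ioi t, γ τ * g τ := by
    intro t ht
    rw [← integral_sub_mul_eq _ (hg.mono_set (Ioi_subset_Ioi ht))
      (hγg.mono_set (Ioi_subset_Ioi ht)), hrep t ht]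
    simp only [g, mul_assoc]
    ring
  obtain ⟨s, hs, hs0⟩ := ((hγinf.eventually_gt_atTop ‖γ 0‖).and (eventually_ge_atTop 0)).exists
  have hD : ∀ t, 0 ≤ t → deriv v (γ t) - α = ∫ τ in Ioi t, g τ := fun t ht =>
    sub_eq_integral_Ioi_of_hasDerivAt (p := fun t => v (γ t))
      (fun x hx => hasDerivAt_deriv_comp_of_ode (hv _ (hγΩ x hx)) (hode _ (hγΩ x hx)) (hγd x))
      (fun x hx =>
        hasDerivAt_sub_mul_deriv_comp_of_ode (hv _ (hγΩ x hx)) (hode _ (hγΩ x hx)) (hγd x))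
      hg hγg hE hs0 (fun h => hs.ne' (by rw [h])) ht
  obtain ⟨K, hK⟩ := exists_pow_mul_rpow_le_of_tendsto_log_div_log hγd.continuous.norm hγ1 ha hlog
    (half_pos hδ₀.1) (N + 1)
  have hI : 0 ≤ ∫ τ in Ioi 0, w τ := integral_nonneg fun τ => by positivity
  refine ⟨2 * (K₀ * C ^ (1 / 2 : ℝ) * ∫ τ in Ioi 0, w τ) * K, fun t ht => ?_⟩
  rw [hD t ht, hE t ht]
  exact norm_mul_sub_le_div_pow (hγ1 t ht).le (by positivity) (by positivity)
    ((hJ t ht).trans_eq (by ring)) ((hL t ht).trans_eq (by ring)) (hK t ht)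

/-- Refined asymptotics: under decay and integrability conditions on `A`
along a path `γ` to infinity, a solution of `v'' + A v = 0` with
`v(z) = O(|z|)` and the stated tail integral representation satisfies
`v(z) = α z + β + O(|z|^{-N})` and `v'(z) = α + O(|z|^{-N})` for every `N`. -/
theorem stmt_14 (Ω : Set ℂ) (hΩ : IsOpen Ω) (A v : ℂ → ℂ)
    (hA : AnalyticOnNhd ℂ A Ω) (hv : AnalyticOnNhd ℂ v Ω)
    (hode : ∀ z ∈ Ω, iteratedDeriv 2 v z + A z * v z = 0)
    (γ : ℝ → ℂ) (hγd : Differentiable ℝ γ)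
    (hγΩ : ∀ t, 0 ≤ t → γ t ∈ Ω)
    (hγinf : Tendsto (fun t => ‖γ t‖) atTop atTop)
    (hAsmall : ∀ t, 0 ≤ t →
      4 ≤ ‖γ t‖ ^ 2 ∧ ‖γ t‖ ^ 2 ≤ ‖A (γ t)‖ ^ (-(1 / 4) : ℝ))
    (hintble : IntegrableOn
      (fun τ => ‖A (γ τ)‖ ^ ((1 / 4 : ℝ)) * ‖deriv γ τ‖) (Set.Ioi 0))
    (hint : (∫ τ in Set.Ioi (0:ℝ),
      ‖A (γ τ)‖ ^ ((1 / 4 : ℝ)) * ‖deriv γ τ‖) < 1 / 4)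
    (C δ₀ : ℝ) (hC : 0 < C) (hδ₀ : δ₀ ∈ Set.Ioo (0:ℝ) 1)
    (htail : ∀ s t : ℝ, 0 ≤ t → t ≤ s → ‖A (γ s)‖ ≤ C * ‖A (γ t)‖ ^ δ₀)
    (hlog : Tendsto (fun t => Real.log (1 / ‖A (γ t)‖) / Real.log ‖γ t‖)
      atTop atTop)
    (K₀ : ℝ) (hK₀ : ∀ t, 0 ≤ t → ‖v (γ t)‖ ≤ K₀ * ‖γ t‖)
    (α β : ℂ)
    (hrep : ∀ t, 0 ≤ t → v (γ t) = α * γ t + β +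
      ∫ τ in Set.Ioi t, (γ t - γ τ) * A (γ τ) * v (γ τ) * deriv γ τ) :
    ∀ N : ℕ, ∃ K : ℝ, ∀ t, 0 ≤ t →
      ‖v (γ t) - α * γ t - β‖ ≤ K / ‖γ t‖ ^ N ∧
      ‖deriv v (γ t) - α‖ ≤ K / ‖γ t‖ ^ N :=
  stmt_14_general Ω A v hA hv hode γ hγd hγΩ hγinf hAsmall hintble C δ₀ hC hδ₀ htail hlog K₀ hK₀ α β
    hrep
end

section
/- Let g : ℂ → ℂ be holomorphic and nonvanishing on a domain D, and define u : ℂ → ℝ by u(z) = log|δ/g(z)| for z ∈ D and u(z) = 0 otherwise, where D is a component of {z : |g(z)| < δ} (so |g| = δ on ∂D). Then u is subharmonic on ℂ. -/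
open MeasureTheory

/-- A function is subharmonic on all of `ℂ` (continuous version): it is
continuous and satisfies the sub-mean value inequality on every circle. -/
def SubharmonicOnUniv (u : ℂ → ℝ) : Prop :=
  Continuous u ∧ ∀ (z : ℂ) (ρ : ℝ), 0 < ρ →
    u z ≤ (2 * Real.pi)⁻¹ *
      ∫ θ in (0:ℝ)..(2 * Real.pi), u (z + ρ * Complex.exp (θ * Complex.I))

/-!
If `z ∉ D` then `u z = 0 ≤` any circle average of `u ≥ 0`. For `z ∈ D` and a circle `S` of
radius `ρ` around `z`, a real trigonometric polynomial is the real part of a polynomial in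
`e^{iθ}`, so by Fourier density there is an entire `H` with `Re H ≤ u ≤ Re H + ε` on `S`.
The function `f = (δ / g) e^{-H}` is holomorphic on `D ∩ B(z, ρ)` with `log ‖f‖ = u - Re H` on
the closure of `D`. On the boundary of `D ∩ B(z, ρ)` this is at most `ε`: on `S` by the choice
of `H`, and on `∂D` because `u = 0` there while `Re H ≥ -ε` on the disc by the minimum
principle. The maximum modulus principle gives `u z ≤ Re H z + ε`, and `Re H z` is the average
of `Re H ≤ u` over `S`.
-/

open Complex Metric Set Real Polynomial ComplexConjugate

lemma Circle.re_mul_zpow (a : ℂ) (n : ℤ) (ζ : Circle) :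
    (a * (ζ : ℂ) ^ n).re = ((if 0 ≤ n then a else conj a) * (ζ : ℂ) ^ n.natAbs).re := by
  split_ifs with hn
  · lift n to ℕ using hn
    simp
  · obtain ⟨k, rfl⟩ : ∃ k : ℕ, n = -k := ⟨n.natAbs, by omega⟩
    rw [zpow_neg, zpow_natCast, Int.natAbs_neg, Int.natAbs_natCast, ← inv_pow,
      ← Circle.coe_inv, Circle.coe_inv_eq_conj, ← map_pow, ← conj_re, map_mul, conj_conj]

theorem Circle.exists_polynomial_abs_sub_re_lt {φ : Circle → ℝ} (hφ : Continuous φ) {ε : ℝ}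
    (hε : 0 < ε) : ∃ P : ℂ[X], ∀ ζ : Circle, |φ ζ - (P.eval (ζ : ℂ)).re| < ε := by
  let F : C(AddCircle (1 : ℝ), ℂ) := ⟨fun x ↦ (φ (AddCircle.toCircle x) : ℂ), by fun_prop⟩
  have hF : F ∈ closure (Submodule.span ℂ (Set.range (fourier (T := 1))) : Set _) := by
    rw [← Submodule.topologicalClosure_coe, span_fourier_closure_eq_top]
    trivial
  obtain ⟨Q, hQ, hFQ⟩ := Metric.mem_closure_iff.mp hF ε hε
  obtain ⟨c, rfl⟩ := Finsupp.mem_span_range_iff_exists_finsupp.mp hQ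
  refine ⟨∑ n ∈ c.support, C (if 0 ≤ n then c n else conj (c n)) * X ^ n.natAbs, fun ζ ↦ ?_⟩
  obtain ⟨x, rfl⟩ : ∃ x : AddCircle (1 : ℝ), AddCircle.toCircle x = ζ :=
    ⟨(AddCircle.homeomorphCircle one_ne_zero).symm ζ, by
      rw [← AddCircle.homeomorphCircle_apply one_ne_zero, Homeomorph.apply_symm_apply]⟩
  have hQx : (c.sum fun n a ↦ a • fourier n) x
      = ∑ n ∈ c.support, c n * (AddCircle.toCircle x : ℂ) ^ n := by
    simp [Finsupp.sum, fourier_apply, AddCircle.toCircle_zsmul]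
  calc |φ (AddCircle.toCircle x) - _|
      = |(F x - (c.sum fun n a ↦ a • fourier n) x).re| := by
        simp only [hQx, F, ContinuousMap.coe_mk, sub_re, ofReal_re, re_sum, Circle.re_mul_zpow,
          eval_finsetSum, eval_mul, eval_C, eval_pow, eval_X]
    _ ≤ dist (F x) ((c.sum fun n a ↦ a • fourier n) x) := by
        rw [dist_eq_norm]; exact abs_re_le_norm _
    _ ≤ dist F (c.sum fun n a ↦ a • fourier n) := ContinuousMap.dist_apply_le_dist x
    _ < ε := hFQ

theorem exists_differentiable_re_le_le_add_on_sphere {φ : ℂ → ℝ} {c : ℂ} {ρ : ℝ}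
    (hφ : ContinuousOn φ (sphere c ρ)) (hρ : 0 < ρ) {ε : ℝ} (hε : 0 < ε) :
    ∃ H : ℂ → ℂ, Differentiable ℂ H ∧
      ∀ w ∈ sphere c ρ, (H w).re ≤ φ w ∧ φ w ≤ (H w).re + ε := by
  have hρ' : (ρ : ℂ) ≠ 0 := ofReal_ne_zero.mpr hρ.ne'
  obtain ⟨P, hP⟩ := Circle.exists_polynomial_abs_sub_re_lt (φ := fun ζ ↦ φ (c + ρ * ζ))
    (hφ.comp_continuous (by fun_prop) fun ζ ↦ by simp [Circle.norm_coe, abs_of_pos hρ])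
    (half_pos hε)
  refine ⟨fun w ↦ P.eval ((w - c) / ρ) - (ε / 2 : ℝ), by fun_prop, fun w hw ↦ ?_⟩
  have hζ : (w - c) / ρ ∈ sphere (0 : ℂ) 1 := by
    rw [mem_sphere_iff_norm] at hw
    rw [mem_sphere_zero_iff_norm, norm_div, hw, norm_real, Real.norm_of_nonneg hρ.le,
      div_self hρ.ne']
  have hPw : |φ (c + ρ * ((w - c) / ρ)) - (P.eval ((w - c) / ρ)).re| < ε / 2 := hP ⟨_, hζ⟩
  rw [mul_div_cancel₀ _ hρ', add_sub_cancel, abs_lt] at hPw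
  simp only [sub_re, ofReal_re]
  constructor <;> linarith

theorem DiffContOnCl.le_re_of_forall_mem_frontier {U : Set ℂ} (hU : Bornology.IsBounded U)
    {F : ℂ → ℂ} (hF : DiffContOnCl ℂ F U) {a : ℝ} (ha : ∀ w ∈ frontier U, a ≤ (F w).re)
    {z : ℂ} (hz : z ∈ closure U) : a ≤ (F z).re := by
  have h := Complex.norm_le_of_forall_mem_frontier_norm_le hU
    (differentiable_exp.comp_diffContOnCl hF.neg) (C := Real.exp (-a))
    (fun w hw ↦ by simpa [Complex.norm_exp] using ha w hw) hz
  simpa [Complex.norm_exp] using h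

theorem Differentiable.re_eq_circleAverage {H : ℂ → ℂ} (hH : Differentiable ℂ H) (c : ℂ) (ρ : ℝ) :
    (H c).re = circleAverage (fun w ↦ (H w).re) c ρ := by
  rw [← hH.diffContOnCl.circleAverage (c := c) (R := ρ)]
  exact (reCLM.circleAverage_comp_comm (hH.continuous.continuousOn.circleIntegrable')).symm

namespace SublevelComponent

variable {δ : ℝ} {g : ℂ → ℂ} {D : Set ℂ} {u : ℂ → ℝ}

theorem ne_zero_of_mem_closure (hδ : 0 < δ) (hDo : IsOpen D) (hgne : ∀ z ∈ D, g z ≠ 0)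
    (hfront : ∀ z ∈ frontier D, ‖g z‖ = δ) {z : ℂ} (hz : z ∈ closure D) : g z ≠ 0 := by
  by_cases hzD : z ∈ D
  · exact hgne z hzD
  · have : ‖g z‖ = δ := hfront z (by rw [hDo.frontier_eq]; exact ⟨hz, hzD⟩)
    exact norm_pos_iff.mp (this ▸ hδ)

theorem eq_log_of_mem_closure (hδ : 0 < δ) (hDo : IsOpen D)
    (hfront : ∀ z ∈ frontier D, ‖g z‖ = δ)
    (hu1 : ∀ z ∈ D, u z = Real.log (δ / ‖g z‖)) (hu2 : ∀ z ∉ D, u z = 0)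
    {z : ℂ} (hz : z ∈ closure D) : u z = Real.log (δ / ‖g z‖) := by
  by_cases hzD : z ∈ D
  · exact hu1 z hzD
  · have : ‖g z‖ = δ := hfront z (by rw [hDo.frontier_eq]; exact ⟨hz, hzD⟩)
    rw [hu2 z hzD, this, div_self hδ.ne', Real.log_one]

theorem nonneg (hgne : ∀ z ∈ D, g z ≠ 0) (hsmall : ∀ z ∈ D, ‖g z‖ < δ)
    (hu1 : ∀ z ∈ D, u z = Real.log (δ / ‖g z‖)) (hu2 : ∀ z ∉ D, u z = 0) (z : ℂ) :
    0 ≤ u z := by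
  by_cases hz : z ∈ D
  · rw [hu1 z hz]
    exact Real.log_nonneg <| (one_le_div (norm_pos_iff.mpr (hgne z hz))).mpr (hsmall z hz).le
  · exact (hu2 z hz).ge

theorem continuous (hδ : 0 < δ) (hDo : IsOpen D) (hgc : ContinuousOn g (closure D))
    (hg0 : ∀ z ∈ closure D, g z ≠ 0)
    (huD : ∀ z ∈ closure D, u z = Real.log (δ / ‖g z‖)) (hu2 : ∀ z ∉ D, u z = 0) :
    Continuous u := by
  have hD : ContinuousOn u (closure D) :=
    ((continuousOn_const.div hgc.norm fun z hz ↦ norm_ne_zero_iff.mpr (hg0 z hz)).log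
      fun z hz ↦ (div_pos hδ (norm_pos_iff.mpr (hg0 z hz))).ne').congr huD
  have hDc : ContinuousOn u Dᶜ := continuousOn_const.congr hu2
  have hcover : closure D ∪ Dᶜ = univ :=
    eq_univ_of_univ_subset <| (union_compl_self D).ge.trans <|
      union_subset_union_left _ subset_closure
  rw [← continuousOn_univ, ← hcover]
  exact hD.union_of_isClosed hDc isClosed_closure hDo.isClosed_compl

theorem norm_div_mul_exp_neg (hδ : 0 < δ) (hg0 : ∀ z ∈ closure D, g z ≠ 0)
    (huD : ∀ z ∈ closure D, u z = Real.log (δ / ‖g z‖)) (H : ℂ → ℂ) {w : ℂ}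
    (hw : w ∈ closure D) : ‖δ / g w * exp (-H w)‖ = Real.exp (u w - (H w).re) := by
  rw [huD w hw, Real.exp_sub, Real.exp_log (div_pos hδ (norm_pos_iff.mpr (hg0 w hw))),
    norm_mul, norm_div, norm_real, Real.norm_of_nonneg hδ.le, Complex.norm_exp, neg_re,
    Real.exp_neg, div_eq_mul_inv, div_eq_mul_inv]

theorem le_re_add_of_forall_mem_sphere (hδ : 0 < δ) (hDo : IsOpen D)
    (hgd : DifferentiableOn ℂ g D) (hgc : ContinuousOn g (closure D))
    (hg0 : ∀ z ∈ closure D, g z ≠ 0) (hu0 : ∀ z, 0 ≤ u z)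
    (huD : ∀ z ∈ closure D, u z = Real.log (δ / ‖g z‖)) (hu2 : ∀ z ∉ D, u z = 0)
    {H : ℂ → ℂ} (hH : Differentiable ℂ H) {c : ℂ} {ρ ε : ℝ}
    (hHu : ∀ w ∈ sphere c ρ, u w ≤ (H w).re + ε) {z : ℂ} (hz : z ∈ D ∩ ball c ρ) :
    u z ≤ (H z).re + ε := by
  have hρ : 0 < ρ := pos_of_mem_ball hz.2
  have hHlow : ∀ w ∈ closedBall c ρ, -ε ≤ (H w).re := fun w hw ↦
    hH.diffContOnCl.le_re_of_forall_mem_frontier isBounded_ball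
      (fun v hv ↦ by
        rw [frontier_ball c hρ.ne'] at hv
        linarith [hHu v hv, hu0 v])
      (by rwa [closure_ball c hρ.ne'])
  set U := D ∩ ball c ρ
  have hUo : IsOpen U := hDo.inter isOpen_ball
  have hclU : closure U ⊆ closure D ∩ closedBall c ρ :=
    (closure_inter_subset_inter_closure _ _).trans
      (inter_subset_inter_right _ closure_ball_subset_closedBall)
  have hf : DiffContOnCl ℂ (fun w ↦ δ / g w * exp (-H w)) U :=
    ⟨((differentiableOn_const _).div (hgd.mono inter_subset_left)
        fun w hw ↦ hg0 w (subset_closure hw.1)).mul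
      (differentiable_exp.comp hH.neg).differentiableOn,
     ((continuousOn_const.div (hgc.mono fun w hw ↦ (hclU hw).1)
        fun w hw ↦ hg0 w (hclU hw).1).mul
      (continuous_exp.comp hH.continuous.neg).continuousOn)⟩
  have hfront : ∀ w ∈ frontier U, ‖δ / g w * exp (-H w)‖ ≤ Real.exp ε := by
    intro w hw
    obtain ⟨hwD, hwB⟩ := hclU (frontier_subset_closure hw)
    rw [norm_div_mul_exp_neg hδ hg0 huD H hwD, Real.exp_le_exp, sub_le_iff_le_add']
    by_cases hws : w ∈ sphere c ρ
    · linarith [hHu w hws]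
    · have hwb : w ∈ ball c ρ := by
        rw [← closedBall_sdiff_sphere]; exact ⟨hwB, hws⟩
      have hwD' : w ∉ D := fun h ↦ (hUo.frontier_eq ▸ hw).2 ⟨h, hwb⟩
      linarith [hu2 w hwD', hHlow w hwB]
  have := norm_le_of_forall_mem_frontier_norm_le (isBounded_ball.subset inter_subset_right)
    hf hfront (subset_closure hz)
  rw [norm_div_mul_exp_neg hδ hg0 huD H (subset_closure hz.1), Real.exp_le_exp] at this
  linarith

theorem le_circleAverage_of_mem (hδ : 0 < δ) (hDo : IsOpen D)
    (hgd : DifferentiableOn ℂ g D) (hgc : ContinuousOn g (closure D))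
    (hg0 : ∀ z ∈ closure D, g z ≠ 0) (hu : Continuous u) (hu0 : ∀ z, 0 ≤ u z)
    (huD : ∀ z ∈ closure D, u z = Real.log (δ / ‖g z‖)) (hu2 : ∀ z ∉ D, u z = 0)
    {z : ℂ} (hz : z ∈ D) {ρ : ℝ} (hρ : 0 < ρ) : u z ≤ circleAverage u z ρ := by
  refine le_of_forall_pos_le_add fun ε hε ↦ ?_
  obtain ⟨H, hH, hHu⟩ := exists_differentiable_re_le_le_add_on_sphere hu.continuousOn hρ hε
  calc u z ≤ (H z).re + ε :=
        le_re_add_of_forall_mem_sphere hδ hDo hgd hgc hg0 hu0 huD hu2 hH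
          (fun w hw ↦ (hHu w hw).2) ⟨hz, mem_ball_self hρ⟩
    _ = circleAverage (fun w ↦ (H w).re) z ρ + ε := by rw [hH.re_eq_circleAverage z ρ]
    _ ≤ circleAverage u z ρ + ε := by
        gcongr with w hw
        · exact (continuous_re.comp hH.continuous).continuousOn.circleIntegrable'
        · exact hu.continuousOn.circleIntegrable'
        · exact (hHu w (abs_of_pos hρ ▸ hw)).1

end SublevelComponent

theorem stmt_18_general (δ : ℝ) (hδ : 0 < δ) (g : ℂ → ℂ) (D : Set ℂ)
    (hDo : IsOpen D)
    (hgd : DifferentiableOn ℂ g D)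
    (hgc : ContinuousOn g (closure D))
    (hgne : ∀ z ∈ D, g z ≠ 0)
    (hsmall : ∀ z ∈ D, ‖g z‖ < δ)
    (hfront : ∀ z ∈ frontier D, ‖g z‖ = δ)
    (u : ℂ → ℝ)
    (hu1 : ∀ z ∈ D, u z = Real.log (δ / ‖g z‖))
    (hu2 : ∀ z ∉ D, u z = 0) :
    SubharmonicOnUniv u := by
  have hg0 : ∀ z ∈ closure D, g z ≠ 0 :=
    fun z ↦ SublevelComponent.ne_zero_of_mem_closure hδ hDo hgne hfront
  have huD : ∀ z ∈ closure D, u z = Real.log (δ / ‖g z‖) :=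
    fun z ↦ SublevelComponent.eq_log_of_mem_closure hδ hDo hfront hu1 hu2
  have hu0 : ∀ z, 0 ≤ u z := SublevelComponent.nonneg hgne hsmall hu1 hu2
  have hu : Continuous u := SublevelComponent.continuous hδ hDo hgc hg0 huD hu2
  refine ⟨hu, fun z ρ hρ ↦ ?_⟩
  change u z ≤ circleAverage u z ρ
  by_cases hz : z ∈ D
  · exact SublevelComponent.le_circleAverage_of_mem hδ hDo hgd hgc hg0 hu hu0 huD hu2 hz hρ
  · rw [hu2 z hz]
    exact circleAverage_nonneg_of_nonneg fun w _ ↦ hu0 w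

/-- If `g` is holomorphic and zero-free on a component `D` of `{|g| < δ}`,
continuous up to the boundary with `|g| = δ` there, then
`u = log(δ/|g|)` on `D`, `u = 0` elsewhere, is subharmonic on `ℂ`. -/
theorem stmt_18 (δ : ℝ) (hδ : 0 < δ) (g : ℂ → ℂ) (D : Set ℂ)
    (hDo : IsOpen D) (hDc : IsConnected D)
    (hgd : DifferentiableOn ℂ g D)
    (hgc : ContinuousOn g (closure D))
    (hgne : ∀ z ∈ D, g z ≠ 0)
    (hsmall : ∀ z ∈ D, ‖g z‖ < δ)
    (hfront : ∀ z ∈ frontier D, ‖g z‖ = δ)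
    (u : ℂ → ℝ)
    (hu1 : ∀ z ∈ D, u z = Real.log (δ / ‖g z‖))
    (hu2 : ∀ z ∉ D, u z = 0) :
    SubharmonicOnUniv u :=
  stmt_18_general δ hδ g D hDo hgd hgc hgne hsmall hfront u hu1 hu2
end
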